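/- Let (ψ, ρ) be a classical solution of the thermohaline circulation model with no wind forcing. Then for every t ≥ 0, the function t ↦ ½ ∫_D ρ(t,·)² is differentiable with derivative equal to N² ∫_D ρ_x(t,·) ψ(t,·) − (ν/Pr) ∫_D (ρ_x(t,·)² + ρ_z(t,·)²); that is, (1/2) d/dt ‖ρ‖² − N² ∫_D ρ_x ψ + (ν/Pr) ‖∇ρ‖² = 0. -/

import Mathlib

open MeasureTheory Real

/-- Partial derivative in the `x` direction. -/
noncomputable def px (u : ℝ × ℝ → ℝ) : ℝ × ℝ → ℝ := fun p => fderiv ℝ u p (1, 0)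

/-- Partial derivative in the `z` direction. -/
noncomputable def pz (u : ℝ × ℝ → ℝ) : ℝ × ℝ → ℝ := fun p => fderiv ℝ u p (0, 1)

/-- The Laplacian `Δu = u_xx + u_zz`. -/
noncomputable def lap (u : ℝ × ℝ → ℝ) : ℝ × ℝ → ℝ := fun p => px (px u) p + pz (pz u) p

/-- The Jacobian operator `J(a,b) = a_x b_z − a_z b_x`. -/
noncomputable def Jac (a b : ℝ × ℝ → ℝ) : ℝ × ℝ → ℝ :=
  fun p => px a p * pz b p - pz a p * px b p

/-- `u` is 1-periodic in both variables. -/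
def Per (u : ℝ × ℝ → ℝ) : Prop :=
  (∀ x z : ℝ, u (x + 1, z) = u (x, z)) ∧ (∀ x z : ℝ, u (x, z + 1) = u (x, z))

/-- The unit square `D = [0,1]²`. -/
def unitSq : Set (ℝ × ℝ) := Set.Icc 0 1 ×ˢ Set.Icc 0 1

section Aux


variable {g u v : ℝ × ℝ → ℝ}

lemma contDiff_px (hg : ContDiff ℝ (⊤ : ℕ∞) g) : ContDiff ℝ (⊤ : ℕ∞) (px g) :=
  (hg.fderiv_right (by simp)).clm_apply contDiff_const

lemma contDiff_pz (hg : ContDiff ℝ (⊤ : ℕ∞) g) : ContDiff ℝ (⊤ : ℕ∞) (pz g) :=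
  (hg.fderiv_right (by simp)).clm_apply contDiff_const

lemma hasDerivAt_px (hg : Differentiable ℝ g) (x z : ℝ) :
    HasDerivAt (fun x' => g (x', z)) (px g (x, z)) x := by
  have h1 : HasDerivAt (fun x' : ℝ => ((x', z) : ℝ × ℝ)) ((1 : ℝ), (0 : ℝ)) x :=
    (hasDerivAt_id x).prodMk (hasDerivAt_const x z)
  exact (hg (x, z)).hasFDerivAt.comp_hasDerivAt x h1

lemma hasDerivAt_pz (hg : Differentiable ℝ g) (x z : ℝ) :
    HasDerivAt (fun z' => g (x, z')) (pz g (x, z)) z := by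
  have h1 : HasDerivAt (fun z' : ℝ => ((x, z') : ℝ × ℝ)) ((0 : ℝ), (1 : ℝ)) z :=
    (hasDerivAt_const z x).prodMk (hasDerivAt_id z)
  exact (hg (x, z)).hasFDerivAt.comp_hasDerivAt z h1

lemma fderiv_translate (hg : Differentiable ℝ g) (c p : ℝ × ℝ) :
    fderiv ℝ (fun q => g (q + c)) p = fderiv ℝ g (p + c) := by
  have h1 : HasFDerivAt (fun q : ℝ × ℝ => q + c) (ContinuousLinearMap.id ℝ (ℝ × ℝ)) p :=
    (hasFDerivAt_id p).add_const c
  have := ((hg (p + c)).hasFDerivAt.comp p h1).fderiv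
  simpa [Function.comp_def] using this

lemma Per.px' (hg : Differentiable ℝ g) (hper : Per g) : Per (px g) := by
  have e1 : (fun q : ℝ × ℝ => g (q + (1, 0))) = g := by
    funext q; show g (q.1 + 1, q.2 + 0) = g q; rw [add_zero]; exact hper.1 q.1 q.2
  have e2 : (fun q : ℝ × ℝ => g (q + (0, 1))) = g := by
    funext q; show g (q.1 + 0, q.2 + 1) = g q; rw [add_zero]; exact hper.2 q.1 q.2
  constructor
  · intro x z
    have h := fderiv_translate hg (1, 0) (x, z)
    rw [e1] at h
    have hp : ((x + 1, z) : ℝ × ℝ) = (x, z) + (1, 0) := by simp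
    rw [px, px, hp, ← h]
  · intro x z
    have h := fderiv_translate hg (0, 1) (x, z)
    rw [e2] at h
    have hp : ((x, z + 1) : ℝ × ℝ) = (x, z) + (0, 1) := by simp
    rw [px, px, hp, ← h]

lemma Per.pz' (hg : Differentiable ℝ g) (hper : Per g) : Per (pz g) := by
  have e1 : (fun q : ℝ × ℝ => g (q + (1, 0))) = g := by
    funext q; show g (q.1 + 1, q.2 + 0) = g q; rw [add_zero]; exact hper.1 q.1 q.2
  have e2 : (fun q : ℝ × ℝ => g (q + (0, 1))) = g := by
    funext q; show g (q.1 + 0, q.2 + 1) = g q; rw [add_zero]; exact hper.2 q.1 q.2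
  constructor
  · intro x z
    have h := fderiv_translate hg (1, 0) (x, z)
    rw [e1] at h
    have hp : ((x + 1, z) : ℝ × ℝ) = (x, z) + (1, 0) := by simp
    rw [pz, pz, hp, ← h]
  · intro x z
    have h := fderiv_translate hg (0, 1) (x, z)
    rw [e2] at h
    have hp : ((x, z + 1) : ℝ × ℝ) = (x, z) + (0, 1) := by simp
    rw [pz, pz, hp, ← h]

lemma Per.mul' (hu : Per u) (hv : Per v) : Per (fun p => u p * v p) :=
  ⟨fun x z => by simp only [hu.1, hv.1], fun x z => by simp only [hu.2, hv.2]⟩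

lemma Per.add' (hu : Per u) (hv : Per v) : Per (fun p => u p + v p) :=
  ⟨fun x z => by simp only [hu.1, hv.1], fun x z => by simp only [hu.2, hv.2]⟩

lemma Per.neg' (hu : Per u) : Per (fun p => -u p) :=
  ⟨fun x z => by simp only [hu.1], fun x z => by simp only [hu.2]⟩

lemma Per.cmul (c : ℝ) (hu : Per u) : Per (fun p => c * u p) :=
  ⟨fun x z => by simp only [hu.1], fun x z => by simp only [hu.2]⟩

lemma unitSq_eq : unitSq = Set.Icc ((0 : ℝ), (0 : ℝ)) (1, 1) := by
  rw [unitSq, Set.Icc_prod_Icc]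

lemma integrableOn_unitSq {f : ℝ × ℝ → ℝ} (hf : Continuous f) :
    IntegrableOn f unitSq := by
  rw [unitSq_eq]; exact hf.integrableOn_Icc

lemma restrict_unitSq :
    (volume : Measure (ℝ × ℝ)).restrict unitSq
      = ((volume : Measure ℝ).restrict (Set.Icc 0 1)).prod
          ((volume : Measure ℝ).restrict (Set.Icc 0 1)) := by
  rw [unitSq, Measure.prod_restrict, ← Measure.volume_eq_prod]

lemma integral_px_eq_zero (hg : ContDiff ℝ (⊤ : ℕ∞) g) (hper : Per g) :
    ∫ p in unitSq, px g p = 0 := by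
  have hcont : Continuous (px g) := (contDiff_px hg).continuous
  have hint : Integrable (px g)
      (((volume : Measure ℝ).restrict (Set.Icc 0 1)).prod
        ((volume : Measure ℝ).restrict (Set.Icc 0 1))) := by
    rw [← restrict_unitSq]; exact integrableOn_unitSq hcont
  rw [show (∫ p in unitSq, px g p) = ∫ p, px g p ∂(((volume : Measure ℝ).restrict (Set.Icc 0 1)).prod
        ((volume : Measure ℝ).restrict (Set.Icc 0 1))) from by rw [← restrict_unitSq],
    MeasureTheory.integral_prod_symm _ hint]
  have inner : ∀ z : ℝ, (∫ x in Set.Icc (0:ℝ) 1, px g (x, z)) = 0 := by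
    intro z
    rw [MeasureTheory.integral_Icc_eq_integral_Ioc, ← intervalIntegral.integral_of_le zero_le_one]
    have : (∫ x in (0:ℝ)..1, px g (x, z)) = g (1, z) - g (0, z) := by
      refine intervalIntegral.integral_eq_sub_of_hasDerivAt
        (f := fun x' => g (x', z)) (f' := fun x' => px g (x', z)) ?_ ?_
      · intro x _; exact hasDerivAt_px (hg.differentiable (by simp)) x z
      · exact (hcont.comp (continuous_id.prodMk continuous_const)).intervalIntegrable 0 1
    rw [this]
    have := hper.1 0 z
    rw [zero_add] at this
    rw [this, sub_self]
  simp only [inner, integral_zero]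

lemma integral_pz_eq_zero (hg : ContDiff ℝ (⊤ : ℕ∞) g) (hper : Per g) :
    ∫ p in unitSq, pz g p = 0 := by
  have hcont : Continuous (pz g) := (contDiff_pz hg).continuous
  have hint : Integrable (pz g)
      (((volume : Measure ℝ).restrict (Set.Icc 0 1)).prod
        ((volume : Measure ℝ).restrict (Set.Icc 0 1))) := by
    rw [← restrict_unitSq]; exact integrableOn_unitSq hcont
  rw [show (∫ p in unitSq, pz g p) = ∫ p, pz g p ∂(((volume : Measure ℝ).restrict (Set.Icc 0 1)).prod
        ((volume : Measure ℝ).restrict (Set.Icc 0 1))) from by rw [← restrict_unitSq],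
    MeasureTheory.integral_prod _ hint]
  have inner : ∀ x : ℝ, (∫ z in Set.Icc (0:ℝ) 1, pz g (x, z)) = 0 := by
    intro x
    rw [MeasureTheory.integral_Icc_eq_integral_Ioc, ← intervalIntegral.integral_of_le zero_le_one]
    have : (∫ z in (0:ℝ)..1, pz g (x, z)) = g (x, 1) - g (x, 0) := by
      refine intervalIntegral.integral_eq_sub_of_hasDerivAt
        (f := fun z' => g (x, z')) (f' := fun z' => pz g (x, z')) ?_ ?_
      · intro z _; exact hasDerivAt_pz (hg.differentiable (by simp)) x z
      · exact (hcont.comp (continuous_const.prodMk continuous_id)).intervalIntegrable 0 1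
    rw [this]
    have := hper.2 x 0
    rw [zero_add] at this
    rw [this, sub_self]
  simp only [inner, integral_zero]

lemma mixed_partials (hg : ContDiff ℝ (⊤ : ℕ∞) g) (p : ℝ × ℝ) :
    px (pz g) p = pz (px g) p := by
  have hd : Differentiable ℝ (fderiv ℝ g) :=
    (hg.fderiv_right (m := ((⊤ : ℕ∞) : WithTop ℕ∞)) (by simp)).differentiable (by simp)
  have h1 : ∀ v w : ℝ × ℝ,
      fderiv ℝ (fun q => fderiv ℝ g q v) p w = fderiv ℝ (fderiv ℝ g) p w v := by
    intro v w
    rw [fderiv_clm_apply (hd p) (differentiableAt_const v)]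
    simp
  have hsymm := second_derivative_symmetric (f' := fderiv ℝ g)
    (fun y => (hg.differentiable (by simp) y).hasFDerivAt) (hd p).hasFDerivAt
  have e1 : pz g = fun q => fderiv ℝ g q (0, 1) := rfl
  have e2 : px g = fun q => fderiv ℝ g q (1, 0) := rfl
  simp only [px, pz, e1, e2]
  rw [h1, h1, hsymm]

lemma Per.sub' (hu : Per u) (hv : Per v) : Per (fun p => u p - v p) :=
  ⟨fun x z => by simp only [hu.1, hv.1], fun x z => by simp only [hu.2, hv.2]⟩

lemma isCompact_unitSq : IsCompact unitSq := by
  rw [unitSq_eq]; exact isCompact_Icc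

lemma measurableSet_unitSq : MeasurableSet unitSq := by
  rw [unitSq_eq]; exact measurableSet_Icc

lemma unitSq_lt_top : volume unitSq < ⊤ := by
  rw [unitSq_eq]; exact measure_Icc_lt_top

end Aux

/-- A classical solution of the thermohaline circulation model with no wind
forcing: `ψ, ρ` are smooth (jointly in time and space), 1-periodic with zero
mean in the spatial variables at each time `t ≥ 0`, and satisfy
`Δψ_t + J(Δψ, ψ) = ρ_x + ν Δ²ψ` and `ρ_t + J(ρ, ψ) = −N² ψ_x + (ν/Pr) Δρ`
pointwise for `t ≥ 0`. -/
def IsSolution (ν Pr N2 : ℝ) (ψ ρ : ℝ → ℝ × ℝ → ℝ) : Prop :=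
  ContDiff ℝ (⊤ : ℕ∞) (Function.uncurry ψ) ∧ ContDiff ℝ (⊤ : ℕ∞) (Function.uncurry ρ) ∧
  (∀ t ≥ (0:ℝ), Per (ψ t) ∧ Per (ρ t) ∧
    (∫ p in unitSq, ψ t p) = 0 ∧ (∫ p in unitSq, ρ t p) = 0) ∧
  (∀ t ≥ (0:ℝ), ∀ p : ℝ × ℝ,
    deriv (fun s => lap (ψ s) p) t + Jac (lap (ψ t)) (ψ t) p
      = px (ρ t) p + ν * lap (lap (ψ t)) p) ∧
  (∀ t ≥ (0:ℝ), ∀ p : ℝ × ℝ,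
    deriv (fun s => ρ s p) t + Jac (ρ t) (ψ t) p
      = -N2 * px (ψ t) p + (ν / Pr) * lap (ρ t) p)

/-- `(1/2) d/dt ‖ρ‖² − N² ∫_D ρ_x ψ + (ν/Pr) ‖∇ρ‖² = 0`. -/
theorem energy_identity_rho
    (ν Pr N2 : ℝ) (hν : 0 < ν) (hPr : 0 < Pr) (hN2 : 0 < N2)
    (ψ ρ : ℝ → ℝ × ℝ → ℝ) (hsol : IsSolution ν Pr N2 ψ ρ) :
    ∀ t ≥ (0:ℝ),
      HasDerivAt (fun s => (1/2) * ∫ p in unitSq, (ρ s p) ^ 2)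
        (N2 * (∫ p in unitSq, px (ρ t) p * ψ t p) -
          (ν / Pr) * ∫ p in unitSq, ((px (ρ t) p) ^ 2 + (pz (ρ t) p) ^ 2)) t := by
  obtain ⟨hψ, hρ, hper, -, hpde⟩ := hsol
  intro t ht
  -- smoothness of spatial slices
  have hslice : ∀ s : ℝ, ContDiff ℝ (⊤ : ℕ∞) (ρ s) := fun s =>
    hρ.comp (contDiff_const.prodMk contDiff_id)
  have hcb : ContDiff ℝ (⊤ : ℕ∞) (ψ t) := hψ.comp (contDiff_const.prodMk contDiff_id)
  have hca : ContDiff ℝ (⊤ : ℕ∞) (ρ t) := hslice t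
  have da : Differentiable ℝ (ρ t) := hca.differentiable (by simp)
  have db : Differentiable ℝ (ψ t) := hcb.differentiable (by simp)
  have dpxa : Differentiable ℝ (px (ρ t)) := (contDiff_px hca).differentiable (by simp)
  have dpza : Differentiable ℝ (pz (ρ t)) := (contDiff_pz hca).differentiable (by simp)
  have dpxb : Differentiable ℝ (px (ψ t)) := (contDiff_px hcb).differentiable (by simp)
  have dpzb : Differentiable ℝ (pz (ψ t)) := (contDiff_pz hcb).differentiable (by simp)
  -- time derivative of ρ
  set Dρ : ℝ × (ℝ × ℝ) → ℝ :=
    fun q => fderiv ℝ (Function.uncurry ρ) q ((1 : ℝ), (0 : ℝ × ℝ)) with hDρdef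
  have hDρc : ContDiff ℝ (⊤ : ℕ∞) Dρ := (hρ.fderiv_right (by simp)).clm_apply contDiff_const
  have hdiff : ∀ (s : ℝ) (p : ℝ × ℝ), HasDerivAt (fun s' => ρ s' p) (Dρ (s, p)) s := by
    intro s p
    have h1 : HasDerivAt (fun s' : ℝ => ((s', p) : ℝ × (ℝ × ℝ)))
        (((1 : ℝ), (0 : ℝ × ℝ))) s := (hasDerivAt_id s).prodMk (hasDerivAt_const s p)
    exact ((hρ.differentiable (by simp)) (s, p)).hasFDerivAt.comp_hasDerivAt s h1
  -- differentiation under the integral sign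
  have hGc : Continuous (fun q : ℝ × (ℝ × ℝ) => 2 * Function.uncurry ρ q * Dρ q) :=
    (continuous_const.mul hρ.continuous).mul hDρc.continuous
  have hK : IsCompact (Set.Icc (t-1) (t+1) ×ˢ unitSq) := isCompact_Icc.prod isCompact_unitSq
  obtain ⟨C, hC⟩ := hK.exists_bound_of_continuousOn hGc.continuousOn
  have key := hasDerivAt_integral_of_dominated_loc_of_deriv_le
    (μ := (volume : Measure (ℝ × ℝ)).restrict unitSq) (𝕜 := ℝ)
    (F := fun s p => (ρ s p) ^ 2) (F' := fun s p => 2 * ρ s p * Dρ (s, p)) (x₀ := t)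
    (bound := fun _ => C) (s := Metric.ball t 1) (Metric.ball_mem_nhds t one_pos)
    (Filter.Eventually.of_forall (fun s =>
      (((hslice s).continuous).pow 2).aestronglyMeasurable))
    (integrableOn_unitSq ((hca.continuous).pow 2))
    (((continuous_const.mul hca.continuous).mul
      (hDρc.continuous.comp (continuous_const.prodMk continuous_id))).aestronglyMeasurable)
    ?_ ?_ ?_
  rotate_left
  · -- bound
    refine (ae_restrict_mem measurableSet_unitSq).mono (fun p hp s hs => ?_)
    refine hC (s, p) ⟨?_, hp⟩
    rw [Metric.mem_ball, Real.dist_eq, abs_lt] at hs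
    constructor <;> simp <;> linarith [hs.1, hs.2]
  · exact integrableOn_const unitSq_lt_top.ne
  · refine Filter.Eventually.of_forall (fun p s _ => ?_)
    have h := (hdiff s p).fun_pow 2
    refine h.congr_deriv ?_
    norm_num
  have main : HasDerivAt (fun s => (1/2 : ℝ) * ∫ p in unitSq, (ρ s p) ^ 2)
      ((1/2 : ℝ) * ∫ p in unitSq, 2 * ρ t p * Dρ (t, p)) t := key.2.const_mul (1/2 : ℝ)
  -- the PDE at time t
  have hpt : ∀ p : ℝ × ℝ, Dρ (t, p) =
      -(Jac (ρ t) (ψ t) p) + (-N2 * px (ψ t) p + (ν / Pr) * lap (ρ t) p) := by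
    intro p
    have h := hpde t ht p
    rw [(hdiff t p).deriv] at h
    linarith
  obtain ⟨hPerb, hPera, -, -⟩ := hper t ht
  -- auxiliary functions for integration by parts
  set A1 : ℝ × ℝ → ℝ := fun q =>
    -(ρ t q * ρ t q * pz (ψ t) q) - 2*N2*(ρ t q * ψ t q) + 2*(ν/Pr)*(ρ t q * px (ρ t) q)
    with hA1def
  set A2 : ℝ × ℝ → ℝ := fun q =>
    ρ t q * ρ t q * px (ψ t) q + 2*(ν/Pr)*(ρ t q * pz (ρ t) q) with hA2def
  set G0 : ℝ × ℝ → ℝ := fun q =>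
    2*N2*(px (ρ t) q * ψ t q) - 2*(ν/Pr)*((px (ρ t) q)^2 + (pz (ρ t) q)^2) with hG0def
  have hA1c : ContDiff ℝ (⊤ : ℕ∞) A1 :=
    ((((hca.mul hca).mul (contDiff_pz hcb)).neg.sub
      (contDiff_const.mul (hca.mul hcb))).add
      (contDiff_const.mul (hca.mul (contDiff_px hca))))
  have hA2c : ContDiff ℝ (⊤ : ℕ∞) A2 :=
    ((hca.mul hca).mul (contDiff_px hcb)).add
      (contDiff_const.mul (hca.mul (contDiff_pz hca)))
  have hG0c : Continuous G0 :=
    ((continuous_const.mul ((contDiff_px hca).continuous.mul hcb.continuous)).sub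
      (continuous_const.mul (((contDiff_px hca).continuous.pow 2).add
        ((contDiff_pz hca).continuous.pow 2))))
  have hA1per : Per A1 :=
    Per.add' (Per.sub' (Per.neg' ((hPera.mul' hPera).mul' (hPerb.pz' db)))
      (Per.cmul _ (hPera.mul' hPerb)))
      (Per.cmul _ (hPera.mul' (hPera.px' da)))
  have hA2per : Per A2 :=
    Per.add' ((hPera.mul' hPera).mul' (hPerb.px' db))
      (Per.cmul _ (hPera.mul' (hPera.pz' da)))
  -- pointwise identity
  have hpoint : ∀ p : ℝ × ℝ,
      2 * ρ t p * Dρ (t, p) = px A1 p + (pz A2 p + G0 p) := by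
    rintro ⟨x, z⟩
    have hxa := hasDerivAt_px da x z
    have hxb := hasDerivAt_px db x z
    have hxpzb := hasDerivAt_px dpzb x z
    have hxpxa := hasDerivAt_px dpxa x z
    have hbig1 : HasDerivAt (fun x' => A1 (x', z))
        (-(((px (ρ t) (x,z)) * ρ t (x,z) + ρ t (x,z) * px (ρ t) (x,z)) * pz (ψ t) (x,z)
            + (ρ t (x,z) * ρ t (x,z)) * px (pz (ψ t)) (x,z))
          - 2*N2*(px (ρ t) (x,z) * ψ t (x,z) + ρ t (x,z) * px (ψ t) (x,z))
          + 2*(ν/Pr)*(px (ρ t) (x,z) * px (ρ t) (x,z) + ρ t (x,z) * px (px (ρ t)) (x,z))) x :=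
      ((((hxa.mul hxa).mul hxpzb).neg.sub
        (HasDerivAt.const_mul (2*N2) (hxa.mul hxb))).add
        (HasDerivAt.const_mul (2*(ν/Pr)) (hxa.mul hxpxa)))
    have e1 := (hasDerivAt_px (hA1c.differentiable (by simp)) x z).unique hbig1
    have hza := hasDerivAt_pz da x z
    have hzb := hasDerivAt_pz db x z
    have hzpxb := hasDerivAt_pz dpxb x z
    have hzpza := hasDerivAt_pz dpza x z
    have hbig2 : HasDerivAt (fun z' => A2 (x, z'))
        (((pz (ρ t) (x,z)) * ρ t (x,z) + ρ t (x,z) * pz (ρ t) (x,z)) * px (ψ t) (x,z)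
            + (ρ t (x,z) * ρ t (x,z)) * pz (px (ψ t)) (x,z)
          + 2*(ν/Pr)*(pz (ρ t) (x,z) * pz (ρ t) (x,z) + ρ t (x,z) * pz (pz (ρ t)) (x,z))) z :=
      (((hza.mul hza).mul hzpxb).add
        (HasDerivAt.const_mul (2*(ν/Pr)) (hza.mul hzpza)))
    have e2 := (hasDerivAt_pz (hA2c.differentiable (by simp)) x z).unique hbig2
    rw [e1, e2, hpt (x, z), hG0def]
    have hmix := mixed_partials hcb (x, z)
    simp only [Jac, lap]
    rw [hmix]
    ring
  -- integrate
  have ih1 : IntegrableOn (px A1) unitSq := integrableOn_unitSq (contDiff_px hA1c).continuous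
  have ih2 : IntegrableOn (pz A2) unitSq := integrableOn_unitSq (contDiff_pz hA2c).continuous
  have ihG : IntegrableOn G0 unitSq := integrableOn_unitSq hG0c
  have iG1 : IntegrableOn (fun q => 2*N2*(px (ρ t) q * ψ t q)) unitSq :=
    integrableOn_unitSq (continuous_const.mul ((contDiff_px hca).continuous.mul hcb.continuous))
  have iG2 : IntegrableOn (fun q => 2*(ν/Pr)*((px (ρ t) q)^2 + (pz (ρ t) q)^2)) unitSq :=
    integrableOn_unitSq (continuous_const.mul (((contDiff_px hca).continuous.pow 2).add
      ((contDiff_pz hca).continuous.pow 2)))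
  have Ecalc : (∫ p in unitSq, 2 * ρ t p * Dρ (t, p))
      = 2*N2*(∫ p in unitSq, px (ρ t) p * ψ t p)
        - 2*(ν/Pr)*(∫ p in unitSq, ((px (ρ t) p)^2 + (pz (ρ t) p)^2)) := by
    have e : (fun p => 2 * ρ t p * Dρ (t, p)) = fun p => px A1 p + (pz A2 p + G0 p) :=
      funext hpoint
    have ih23 : IntegrableOn (fun p => pz A2 p + G0 p) unitSq := ih2.add ihG
    rw [e, integral_add ih1 ih23, integral_add ih2 ihG,
      integral_px_eq_zero hA1c hA1per, integral_pz_eq_zero hA2c hA2per, hG0def]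
    have eG : (∫ p in unitSq, (2*N2*(px (ρ t) p * ψ t p)
        - 2*(ν/Pr)*((px (ρ t) p)^2 + (pz (ρ t) p)^2)))
        = (∫ p in unitSq, 2*N2*(px (ρ t) p * ψ t p))
          - ∫ p in unitSq, 2*(ν/Pr)*((px (ρ t) p)^2 + (pz (ρ t) p)^2) :=
      integral_sub iG1 iG2
    rw [eG, integral_const_mul, integral_const_mul]
    ring
  have hfinal : (1/2 : ℝ) * (∫ p in unitSq, 2 * ρ t p * Dρ (t, p))
      = N2 * (∫ p in unitSq, px (ρ t) p * ψ t p) -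
          (ν / Pr) * ∫ p in unitSq, ((px (ρ t) p) ^ 2 + (pz (ρ t) p) ^ 2) := by
    rw [Ecalc]; ring
  exact hfinal ▸ main
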